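/- arXiv:math/0602520 — 2 statements merged into one kernel-verified Lean document; each statement's English description precedes it below -/
import Mathlib

section
/- Let γ be a closed broken-geodesic (piecewise great-circle) loop on the unit sphere S². If the length of γ is strictly less than 2π, then there exists an open hemisphere of S² containing γ (and hence a closed hemisphere disjoint from γ). -/
open Set Metric RealInnerProductSpace

/-- The intrinsic (angular) distance between two points of the unit sphere `S² ⊆ ℝ³`. -/
noncomputable def sdist (x y : EuclideanSpace ℝ (Fin 3)) : ℝ := Real.arccos ⟪x, y⟫

/-- `z` lies on a minimizing great-circle arc from `x` to `y` on the unit sphere. -/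
def OnArc (x y z : EuclideanSpace ℝ (Fin 3)) : Prop :=
  ‖z‖ = 1 ∧ sdist x z + sdist z y = sdist x y

section Aux

local notation "E3" => EuclideanSpace ℝ (Fin 3)

lemma arccos_antitone {x y : ℝ} (h : x ≤ y) : Real.arccos y ≤ Real.arccos x := by
  rw [Real.arccos_eq_pi_div_two_sub_arcsin, Real.arccos_eq_pi_div_two_sub_arcsin]
  linarith [Real.monotone_arcsin h]

lemma inner_mem {x y : E3} (hx : ‖x‖ = 1) (hy : ‖y‖ = 1) :
    -1 ≤ ⟪x, y⟫ ∧ ⟪x, y⟫ ≤ 1 := by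
  have h := abs_real_inner_le_norm x y
  rw [hx, hy] at h
  have := abs_le.mp (by linarith [h] : |⟪x, y⟫| ≤ 1)
  exact this

lemma sdist_nonneg' (x y : E3) : 0 ≤ sdist x y := Real.arccos_nonneg _

lemma sdist_le_pi' (x y : E3) : sdist x y ≤ Real.pi := Real.arccos_le_pi _

lemma sdist_comm' (x y : E3) : sdist x y = sdist y x := by
  unfold sdist; rw [real_inner_comm]

lemma cos_sdist {x y : E3} (hx : ‖x‖ = 1) (hy : ‖y‖ = 1) :
    Real.cos (sdist x y) = ⟪x, y⟫ :=
  Real.cos_arccos (inner_mem hx hy).1 (inner_mem hx hy).2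

lemma sdist_self {x : E3} (hx : ‖x‖ = 1) : sdist x x = 0 := by
  unfold sdist
  rw [real_inner_self_eq_norm_sq, hx]
  simpa using Real.arccos_one

lemma sdist_eq_zero {x y : E3} (hx : ‖x‖ = 1) (hy : ‖y‖ = 1) (h : sdist x y = 0) :
    x = y := by
  have h1 : (1:ℝ) ≤ ⟪x, y⟫ := Real.arccos_eq_zero.mp h
  have h2 := (inner_mem hx hy).2
  exact (inner_eq_one_iff_of_norm_eq_one hx hy).mp (le_antisymm h2 h1)

lemma sdist_triangle {x y z : E3} (hx : ‖x‖ = 1) (hy : ‖y‖ = 1) (hz : ‖z‖ = 1) :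
    sdist x z ≤ sdist x y + sdist y z := by
  by_cases h : Real.pi ≤ sdist x y + sdist y z
  · exact le_trans (sdist_le_pi' x z) h
  push_neg at h
  have key : Real.cos (sdist x y + sdist y z) ≤ ⟪x, z⟫ := by
    rw [Real.cos_add]
    unfold sdist
    rw [Real.sin_arccos, Real.sin_arccos,
      Real.cos_arccos (inner_mem hx hy).1 (inner_mem hx hy).2,
      Real.cos_arccos (inner_mem hy hz).1 (inner_mem hy hz).2]
    have hxx : ⟪x, x⟫ = (1:ℝ) := by rw [real_inner_self_eq_norm_sq, hx]; norm_num
    have hyy : ⟪y, y⟫ = (1:ℝ) := by rw [real_inner_self_eq_norm_sq, hy]; norm_num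
    have hzz : ⟪z, z⟫ = (1:ℝ) := by rw [real_inner_self_eq_norm_sq, hz]; norm_num
    have huu : ⟪x - ⟪x, y⟫ • y, x - ⟪x, y⟫ • y⟫ = 1 - ⟪x, y⟫ ^ 2 := by
      simp only [inner_sub_left, inner_sub_right, real_inner_smul_left,
        real_inner_smul_right, hxx, hyy, real_inner_comm y x]
      ring
    have hvv : ⟪z - ⟪y, z⟫ • y, z - ⟪y, z⟫ • y⟫ = 1 - ⟪y, z⟫ ^ 2 := by
      simp only [inner_sub_left, inner_sub_right, real_inner_smul_left,
        real_inner_smul_right, hzz, hyy, real_inner_comm z y]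
      ring
    have huv : ⟪x - ⟪x, y⟫ • y, z - ⟪y, z⟫ • y⟫ = ⟪x, z⟫ - ⟪x, y⟫ * ⟪y, z⟫ := by
      simp only [inner_sub_left, inner_sub_right, real_inner_smul_left,
        real_inner_smul_right, hyy, real_inner_comm y x, real_inner_comm z y]
      ring
    have hun : ‖x - ⟪x, y⟫ • y‖ = Real.sqrt (1 - ⟪x, y⟫ ^ 2) := by
      rw [← huu, real_inner_self_eq_norm_sq, Real.sqrt_sq (norm_nonneg _)]
    have hvn : ‖z - ⟪y, z⟫ • y‖ = Real.sqrt (1 - ⟪y, z⟫ ^ 2) := by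
      rw [← hvv, real_inner_self_eq_norm_sq, Real.sqrt_sq (norm_nonneg _)]
    have hcs : -(‖x - ⟪x, y⟫ • y‖ * ‖z - ⟪y, z⟫ • y‖) ≤ ⟪x - ⟪x, y⟫ • y, z - ⟪y, z⟫ • y⟫ :=
      neg_le_of_abs_le (abs_real_inner_le_norm _ _)
    rw [hun, hvn] at hcs
    rw [huv] at hcs
    linarith
  calc sdist x z = Real.arccos ⟪x, z⟫ := rfl
    _ ≤ Real.arccos (Real.cos (sdist x y + sdist y z)) := arccos_antitone key
    _ = sdist x y + sdist y z := Real.arccos_cos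
        (add_nonneg (sdist_nonneg' _ _) (sdist_nonneg' _ _)) (le_of_lt h)

end Aux

section Geo

local notation "E3" => EuclideanSpace ℝ (Fin 3)

/-- Explicit parametrization of the minimizing great-circle arc. -/
noncomputable def geo (x y : E3) (d t : ℝ) : E3 :=
  (Real.sin (d - t) / Real.sin d) • x + (Real.sin t / Real.sin d) • y

variable {x y : E3} {d : ℝ}

lemma geo_zero (hs : Real.sin d ≠ 0) : geo x y d 0 = x := by
  unfold geo
  rw [Real.sin_zero, sub_zero, div_self hs]
  simp

lemma geo_d (hs : Real.sin d ≠ 0) : geo x y d d = y := by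
  unfold geo
  rw [sub_self, Real.sin_zero, div_self hs]
  simp

lemma inner_geo_geo (hx : ‖x‖ = 1) (hy : ‖y‖ = 1) (hxy : ⟪x, y⟫ = Real.cos d)
    (hs : Real.sin d ≠ 0) (s t : ℝ) :
    ⟪geo x y d s, geo x y d t⟫ = Real.cos (s - t) := by
  have hxx : ⟪x, x⟫ = (1:ℝ) := by rw [real_inner_self_eq_norm_sq, hx]; norm_num
  have hyy : ⟪y, y⟫ = (1:ℝ) := by rw [real_inner_self_eq_norm_sq, hy]; norm_num
  have hyx : ⟪y, x⟫ = Real.cos d := by rw [real_inner_comm]; exact hxy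
  unfold geo
  simp only [inner_add_left, inner_add_right, real_inner_smul_left, real_inner_smul_right,
    hxx, hyy, hxy, hyx]
  rw [Real.sin_sub, Real.sin_sub, Real.cos_sub]
  field_simp
  linear_combination (-(Real.sin t * Real.sin s)) * Real.sin_sq_add_cos_sq d

lemma norm_geo (hx : ‖x‖ = 1) (hy : ‖y‖ = 1) (hxy : ⟪x, y⟫ = Real.cos d)
    (hs : Real.sin d ≠ 0) (t : ℝ) : ‖geo x y d t‖ = 1 := by
  have h := inner_geo_geo hx hy hxy hs t t
  rw [sub_self, Real.cos_zero, real_inner_self_eq_norm_sq] at h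
  nlinarith [norm_nonneg (geo x y d t)]

lemma sdist_geo_geo (hx : ‖x‖ = 1) (hy : ‖y‖ = 1) (hxy : ⟪x, y⟫ = Real.cos d)
    (hs : Real.sin d ≠ 0) {s t : ℝ} (h : |s - t| ≤ Real.pi) :
    sdist (geo x y d s) (geo x y d t) = |s - t| := by
  unfold sdist
  rw [inner_geo_geo hx hy hxy hs, ← Real.cos_abs, Real.arccos_cos (abs_nonneg _) h]

end Geo

section Converse

local notation "E3" => EuclideanSpace ℝ (Fin 3)

lemma onArc_eq_geo {x y z : E3} (hx : ‖x‖ = 1) (hy : ‖y‖ = 1)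
    (hd0 : 0 < sdist x y) (hdpi : sdist x y < Real.pi) (hz : OnArc x y z) :
    z = geo x y (sdist x y) (sdist x z) := by
  obtain ⟨hz1, hz2⟩ := hz
  have hsinD : 0 < Real.sin (sdist x y) := Real.sin_pos_of_pos_of_lt_pi hd0 hdpi
  set d := sdist x y with hd
  set a := sdist x z with ha
  set b := sdist z y with hb
  have hab : a + b = d := hz2
  have hxx : ⟪x, x⟫ = (1:ℝ) := by rw [real_inner_self_eq_norm_sq, hx]; norm_num
  have hyy : ⟪y, y⟫ = (1:ℝ) := by rw [real_inner_self_eq_norm_sq, hy]; norm_num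
  have hzz : ⟪z, z⟫ = (1:ℝ) := by rw [real_inner_self_eq_norm_sq, hz1]; norm_num
  have hca : ⟪x, z⟫ = Real.cos a := (cos_sdist hx hz1).symm
  have hca' : ⟪z, x⟫ = Real.cos a := by rw [real_inner_comm]; exact hca
  have hcb : ⟪z, y⟫ = Real.cos b := (cos_sdist hz1 hy).symm
  have hcb' : ⟪y, z⟫ = Real.cos b := by rw [real_inner_comm]; exact hcb
  have hcd : ⟪x, y⟫ = Real.cos d := (cos_sdist hx hy).symm
  have hsa : 0 ≤ Real.sin a :=
    Real.sin_nonneg_of_nonneg_of_le_pi (sdist_nonneg' x z) (sdist_le_pi' x z)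
  have hsb : 0 ≤ Real.sin b :=
    Real.sin_nonneg_of_nonneg_of_le_pi (sdist_nonneg' z y) (sdist_le_pi' z y)
  set u : E3 := x - Real.cos a • z with hu
  set v : E3 := y - Real.cos b • z with hv
  have huu : ⟪u, u⟫ = 1 - Real.cos a ^ 2 := by
    simp only [hu, inner_sub_left, inner_sub_right, real_inner_smul_left,
      real_inner_smul_right, hxx, hzz, hca, hca']
    ring
  have hvv : ⟪v, v⟫ = 1 - Real.cos b ^ 2 := by
    simp only [hv, inner_sub_left, inner_sub_right, real_inner_smul_left,
      real_inner_smul_right, hyy, hzz, hcb, hcb']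
    ring
  have huv : ⟪u, v⟫ = -(Real.sin a * Real.sin b) := by
    have h2 : ⟪u, v⟫ = Real.cos d - Real.cos a * Real.cos b := by
      simp only [hu, hv, inner_sub_left, inner_sub_right, real_inner_smul_left,
        real_inner_smul_right, hzz, hcd, hca, hca', hcb, hcb']
      ring
    rw [h2, ← hab, Real.cos_add]
    ring
  have hun : ‖u‖ = Real.sin a := by
    have h1 : ‖u‖ ^ 2 = Real.sin a ^ 2 := by
      rw [← real_inner_self_eq_norm_sq, huu, Real.sin_sq]
    rw [← Real.sqrt_sq (norm_nonneg u), h1, Real.sqrt_sq hsa]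
  have hvn : ‖v‖ = Real.sin b := by
    have h1 : ‖v‖ ^ 2 = Real.sin b ^ 2 := by
      rw [← real_inner_self_eq_norm_sq, hvv, Real.sin_sq]
    rw [← Real.sqrt_sq (norm_nonneg v), h1, Real.sqrt_sq hsb]
  have key : ‖-v‖ • u = ‖u‖ • (-v) :=
    inner_eq_norm_mul_iff_real.mp (by rw [inner_neg_right, norm_neg, hun, hvn, huv]; ring)
  rw [norm_neg, hun, hvn, smul_neg] at key
  have hpar : Real.sin b • u + Real.sin a • v = 0 := by rw [key]; abel
  have hvec : Real.sin b • x + Real.sin a • y = Real.sin d • z := by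
    have hsplit : Real.sin b • x + Real.sin a • y
        = (Real.sin b • u + Real.sin a • v)
          + (Real.sin b * Real.cos a + Real.sin a * Real.cos b) • z := by
      rw [hu, hv]; module
    rw [hsplit, hpar, zero_add,
      show Real.sin b * Real.cos a + Real.sin a * Real.cos b
        = Real.sin (a + b) from by rw [Real.sin_add]; ring, hab]
  have hz' : z = (Real.sin b / Real.sin d) • x + (Real.sin a / Real.sin d) • y := by
    have h1 : (Real.sin d)⁻¹ • (Real.sin b • x + Real.sin a • y)
        = (Real.sin d)⁻¹ • (Real.sin d • z) := by rw [hvec]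
    rw [smul_smul, inv_mul_cancel₀ (ne_of_gt hsinD), one_smul] at h1
    rw [← h1, smul_add, smul_smul, smul_smul, div_eq_inv_mul, div_eq_inv_mul]
  unfold geo
  rw [show d - a = b from by linarith]
  exact hz'

end Converse

/-- A closed broken-geodesic loop on the unit sphere `S²` of length `< 2π` is contained
in an open hemisphere (hence disjoint from the complementary closed hemisphere). -/
theorem stmt_0 (n : ℕ) (hn : 1 ≤ n) (p : ℕ → EuclideanSpace ℝ (Fin 3))
    (hunit : ∀ i ≤ n, ‖p i‖ = 1) (hclosed : p n = p 0)
    (hlen : ∑ i ∈ Finset.range n, sdist (p i) (p (i + 1)) < 2 * Real.pi) :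
    ∃ v : EuclideanSpace ℝ (Fin 3), ‖v‖ = 1 ∧
      (∀ z, (∃ i < n, OnArc (p i) (p (i + 1)) z) → 0 < ⟪v, z⟫) ∧
      (∀ z, (∃ i < n, OnArc (p i) (p (i + 1)) z) → ¬ 0 ≤ ⟪-v, z⟫) := by
  classical
  set L := ∑ i ∈ Finset.range n, sdist (p i) (p (i + 1)) with hLdef
  set s : ℕ → ℝ := fun j => ∑ i ∈ Finset.range j, sdist (p i) (p (i + 1)) with hsdef
  have hs_succ : ∀ j, s (j + 1) = s j + sdist (p j) (p (j + 1)) := by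
    intro j; simp only [hsdef]; exact Finset.sum_range_succ _ j
  have hs0 : s 0 = 0 := by simp [hsdef]
  have hsn : s n = L := rfl
  have hterm_nonneg : ∀ i : ℕ, 0 ≤ sdist (p i) (p (i + 1)) := fun i => sdist_nonneg' _ _
  have hs_mono : ∀ i j : ℕ, i ≤ j → s i ≤ s j := by
    intro i j hij
    induction j, hij using Nat.le_induction with
    | base => exact le_refl _
    | succ m hm ih =>
      have := hs_succ m
      have := hterm_nonneg m
      linarith
  have hs_le : ∀ i, i ≤ n → s i ≤ L := by
    intro i hi
    rw [← hsn]
    exact hs_mono i n hi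
  have hchain : ∀ j, j ≤ n → ∀ i, i ≤ j → sdist (p i) (p j) ≤ s j - s i := by
    intro j
    induction j with
    | zero =>
      intro _ i hij
      have hi0 : i = 0 := Nat.le_zero.mp hij
      subst hi0
      rw [sdist_self (hunit 0 (Nat.zero_le n))]
      linarith
    | succ m ih =>
      intro hjn i hij
      rcases Nat.eq_or_lt_of_le hij with he | hlt
      · rw [he, sdist_self (hunit (m + 1) hjn)]
        linarith
      · have him : i ≤ m := Nat.lt_succ_iff.mp hlt
        have hmn : m ≤ n := le_trans (Nat.le_succ m) hjn
        have h1 := ih hmn i him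
        have h2 : sdist (p i) (p (m + 1)) ≤ sdist (p i) (p m) + sdist (p m) (p (m + 1)) :=
          sdist_triangle (hunit i (le_trans him hmn)) (hunit m hmn) (hunit (m + 1) hjn)
        have h3 := hs_succ m
        linarith
  have hLpi : L < 2 * Real.pi := hlen
  have hedge : ∀ i, i < n → sdist (p i) (p (i + 1)) < Real.pi := by
    intro k hk
    by_contra hcon
    push_neg at hcon
    have h1 : sdist (p 0) (p k) ≤ s k - s 0 := hchain k (le_of_lt hk) 0 (Nat.zero_le _)
    have h2 : sdist (p (k + 1)) (p n) ≤ s n - s (k + 1) := hchain n le_rfl (k + 1) hk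
    rw [hclosed] at h2
    have h3 : sdist (p (k + 1)) (p k) ≤ sdist (p (k + 1)) (p 0) + sdist (p 0) (p k) :=
      sdist_triangle (hunit (k + 1) hk) (hunit 0 (Nat.zero_le _)) (hunit k (le_of_lt hk))
    have h4 : sdist (p (k + 1)) (p k) = sdist (p k) (p (k + 1)) := sdist_comm' _ _
    have h5 := hs_succ k
    linarith
  clear_value L s
  by_cases hL0 : L ≤ 0
  · -- degenerate loop: all points coincide
    have hp00 : ⟪p 0, p 0⟫ = (1:ℝ) := by
      rw [real_inner_self_eq_norm_sq, hunit 0 (Nat.zero_le n)]; norm_num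
    have hzp0 : ∀ z, (∃ i < n, OnArc (p i) (p (i + 1)) z) → z = p 0 := by
      rintro z ⟨i, hi, hz1, hz2⟩
      have hterm0 : sdist (p i) (p (i + 1)) ≤ 0 := by
        have hsingle : sdist (p i) (p (i + 1)) ≤ L := by
          rw [hLdef]
          exact Finset.single_le_sum (fun j _ => hterm_nonneg j) (Finset.mem_range.mpr hi)
        linarith
      have hpiz : sdist (p i) z = 0 := by
        have := sdist_nonneg' (p i) z
        have := sdist_nonneg' z (p (i + 1))
        linarith
      have hzi : p i = z := sdist_eq_zero (hunit i (le_of_lt hi)) hz1 hpiz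
      have hpi0 : sdist (p 0) (p i) = 0 := by
        have h1 := hchain i (le_of_lt hi) 0 (Nat.zero_le _)
        have h2 : s i ≤ L := hs_le i (le_of_lt hi)
        have := sdist_nonneg' (p 0) (p i)
        linarith
      rw [← hzi, (sdist_eq_zero (hunit 0 (Nat.zero_le n)) (hunit i (le_of_lt hi)) hpi0)]
    refine ⟨p 0, hunit 0 (Nat.zero_le n), ?_, ?_⟩
    · intro z hz
      rw [hzp0 z hz, hp00]
      norm_num
    · intro z hz
      rw [hzp0 z hz, inner_neg_left, hp00]
      norm_num
  · push_neg at hL0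
    have hkey : ∃ k, L / 2 < s (k + 1) := by
      refine ⟨n - 1, ?_⟩
      rw [Nat.sub_add_cancel hn, hsn]
      linarith
    obtain ⟨k, hkn, hk2, hk1⟩ : ∃ k, k < n ∧ s k ≤ L / 2 ∧ L / 2 < s (k + 1) := by
      classical
      refine ⟨Nat.find hkey, ?_, ?_, Nat.find_spec hkey⟩
      · have h1 : Nat.find hkey ≤ n - 1 :=
          Nat.find_le (by rw [Nat.sub_add_cancel hn, hsn]; linarith)
        omega
      · rcases Nat.eq_zero_or_pos (Nat.find hkey) with h0 | hpos
        · rw [h0, hs0]; linarith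
        · obtain ⟨m, hm⟩ := Nat.exists_eq_succ_of_ne_zero (Nat.pos_iff_ne_zero.mp hpos)
          have h2 := Nat.find_min hkey (m := m) (by omega)
          push_neg at h2
          rw [hm]
          exact h2
    obtain ⟨dk, hdk⟩ : ∃ d : ℝ, d = sdist (p k) (p (k + 1)) := ⟨_, rfl⟩
    have hdkpos : 0 < dk := by
      have h1 := hs_succ k
      rw [← hdk] at h1
      linarith
    have hdkpi : dk < Real.pi := by rw [hdk]; exact hedge k hkn
    have hsink : 0 < Real.sin dk := Real.sin_pos_of_pos_of_lt_pi hdkpos hdkpi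
    have hcosk : ⟪p k, p (k + 1)⟫ = Real.cos dk := by
      rw [hdk]
      exact (cos_sdist (hunit k (le_of_lt hkn)) (hunit (k + 1) hkn)).symm
    obtain ⟨t₀, ht₀⟩ : ∃ t : ℝ, t = L / 2 - s k := ⟨_, rfl⟩
    have ht₀0 : 0 ≤ t₀ := by linarith
    have ht₀dk : t₀ < dk := by
      have h1 := hs_succ k
      rw [← hdk] at h1
      linarith
    obtain ⟨B, hB⟩ : ∃ B, B = geo (p k) (p (k + 1)) dk t₀ := ⟨_, rfl⟩
    have hBnorm : ‖B‖ = 1 := by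
      rw [hB]
      exact norm_geo (hunit k (le_of_lt hkn)) (hunit (k + 1) hkn) hcosk (ne_of_gt hsink) t₀
    have hpk_eq : p k = geo (p k) (p (k + 1)) dk 0 := (geo_zero (ne_of_gt hsink)).symm
    have hpk1_eq : p (k + 1) = geo (p k) (p (k + 1)) dk dk := (geo_d (ne_of_gt hsink)).symm
    have hBk : sdist (p k) B = t₀ := by
      conv_lhs => rw [hpk_eq, hB]
      rw [sdist_geo_geo (hunit k (le_of_lt hkn)) (hunit (k + 1) hkn) hcosk (ne_of_gt hsink)
        (by rw [abs_le]; constructor <;> linarith)]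
      rw [zero_sub, abs_neg, abs_of_nonneg ht₀0]
    have hBk1 : sdist B (p (k + 1)) = dk - t₀ := by
      conv_lhs => rw [hpk1_eq, hB]
      rw [sdist_geo_geo (hunit k (le_of_lt hkn)) (hunit (k + 1) hkn) hcosk (ne_of_gt hsink)
        (by rw [abs_le]; constructor <;> linarith)]
      rw [abs_of_nonpos (by linarith), neg_sub]
    have hOnB : OnArc (p k) (p (k + 1)) B := ⟨hBnorm, by rw [hBk, hBk1, ← hdk]; ring⟩
    -- the central estimate
    have hmain : ∀ z i, i < n → OnArc (p i) (p (i + 1)) z →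
        sdist (p 0) z + sdist z B ≤ L / 2 := by
      intro z i hi hOn
      obtain ⟨hz1, hz2⟩ := hOn
      have hsucc_i := hs_succ i
      have hzkB : sdist z B ≤ sdist z (p k) + t₀ := by
        have := sdist_triangle hz1 (hunit k (le_of_lt hkn)) hBnorm
        linarith [hBk]
      rcases lt_trichotomy i k with hik | hik | hik
      · -- i < k : go forward A → p i → z → p (i+1) → p k → B
        have e1 : sdist (p 0) z ≤ s i + sdist (p i) z := by
          have h1 := sdist_triangle (hunit 0 (Nat.zero_le n)) (hunit i (le_of_lt hi)) hz1
          have h2 := hchain i (le_of_lt hi) 0 (Nat.zero_le _)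
          linarith
        have e2 : sdist z B ≤ sdist z (p (i + 1)) + (s k - s (i + 1)) + t₀ := by
          have h1 := sdist_triangle hz1 (hunit (i + 1) hi) hBnorm
          have h2 := sdist_triangle (hunit (i + 1) hi) (hunit k (le_of_lt hkn)) hBnorm
          have h3 := hchain k (le_of_lt hkn) (i + 1) hik
          linarith [hBk]
        linarith
      · -- i = k
        rw [hik] at hz2 hsucc_i
        set tz := sdist (p k) z with htz
        have htznn : 0 ≤ tz := sdist_nonneg' _ _
        have htzle : tz ≤ dk := by
          have := sdist_nonneg' z (p (k + 1))
          rw [← hdk] at hz2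
          linarith [hz2]
        have hz_eq : z = geo (p k) (p (k + 1)) dk tz := by
          have hgeo := onArc_eq_geo (hunit k (le_of_lt hkn)) (hunit (k + 1) hkn)
            (by rw [← hdk]; exact hdkpos) (by rw [← hdk]; exact hdkpi) ⟨hz1, hz2⟩
          rw [← hdk, ← htz] at hgeo
          exact hgeo
        have hsdzB : sdist z B = |tz - t₀| := by
          rw [hz_eq, hB]
          exact sdist_geo_geo (hunit k (le_of_lt hkn)) (hunit (k + 1) hkn) hcosk
            (ne_of_gt hsink) (by rw [abs_le]; constructor <;> linarith)
        rw [← hdk] at hz2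
        rcases le_total tz t₀ with hcase | hcase
        · have e1 : sdist (p 0) z ≤ s k + tz := by
            have h1 := sdist_triangle (hunit 0 (Nat.zero_le n)) (hunit k (le_of_lt hkn)) hz1
            have h2 := hchain k (le_of_lt hkn) 0 (Nat.zero_le _)
            linarith
          rw [hsdzB, abs_of_nonpos (by linarith), neg_sub]
          linarith
        · have e1 : sdist (p 0) z ≤ (dk - tz) + (L - s (k + 1)) := by
            have h1 : sdist (p 0) z = sdist z (p 0) := sdist_comm' _ _
            have h2 := sdist_triangle hz1 (hunit (k + 1) hkn) (hunit 0 (Nat.zero_le n))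
            have h3 := hchain n le_rfl (k + 1) hkn
            rw [hclosed] at h3
            have h4 : sdist (p (k + 1)) (p 0) = sdist (p 0) (p (k + 1)) := sdist_comm' _ _
            have h5 : sdist z (p (k + 1)) = dk - tz := by linarith [hz2]
            rw [h1]
            rw [hsn] at h3
            linarith
          rw [hsdzB, abs_of_nonneg (by linarith)]
          have h6 := hs_succ k
          rw [← hdk] at h6
          linarith
      · -- k < i : B → p (k+1) → p i → z → p (i+1) → p n = p 0
        have e1 : sdist (p 0) z ≤ sdist z (p (i + 1)) + (L - s (i + 1)) := by
          have h1 : sdist (p 0) z = sdist z (p 0) := sdist_comm' _ _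
          have h2 := sdist_triangle hz1 (hunit (i + 1) hi) (hunit 0 (Nat.zero_le n))
          have h3 := hchain n le_rfl (i + 1) hi
          rw [hclosed] at h3
          have h4 : sdist (p (i + 1)) (p 0) = sdist (p 0) (p (i + 1)) := sdist_comm' _ _
          rw [h1, hsn] at *
          linarith
        have e2 : sdist z B ≤ sdist (p i) z + (s i - s (k + 1)) + (dk - t₀) := by
          have h1 := sdist_triangle hz1 (hunit i (le_of_lt hi)) hBnorm
          have h2 := sdist_triangle (hunit i (le_of_lt hi)) (hunit (k + 1) hkn) hBnorm
          have h3 := hchain i (le_of_lt hi) (k + 1) hik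
          have h4 : sdist (p i) (p (k + 1)) = sdist (p (k + 1)) (p i) := sdist_comm' _ _
          have h5 : sdist z (p i) = sdist (p i) z := sdist_comm' _ _
          have h6 : sdist (p (k + 1)) B = dk - t₀ := by
            rw [sdist_comm']; exact hBk1
          linarith
        have h7 := hs_succ k
        linarith
    -- build the hemisphere direction
    have hppB : sdist (p 0) B ≤ L / 2 := by
      have h1 := hmain B k hkn hOnB
      rw [sdist_self hBnorm] at h1
      linarith
    have hcAB : -1 < ⟪p 0, B⟫ := by
      by_contra hcon
      push_neg at hcon
      have h1 : sdist (p 0) B = Real.pi := Real.arccos_eq_pi.mpr hcon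
      have := Real.pi_pos
      linarith
    have hp00 : ⟪p 0, p 0⟫ = (1:ℝ) := by
      rw [real_inner_self_eq_norm_sq, hunit 0 (Nat.zero_le n)]; norm_num
    have hBB : ⟪B, B⟫ = (1:ℝ) := by
      rw [real_inner_self_eq_norm_sq, hBnorm]; norm_num
    obtain ⟨w, hw⟩ : ∃ w : EuclideanSpace ℝ (Fin 3), w = p 0 + B := ⟨_, rfl⟩
    have hww : ⟪w, w⟫ = 2 + 2 * ⟪p 0, B⟫ := by
      simp only [hw, inner_add_left, inner_add_right, hp00, hBB, real_inner_comm B (p 0)]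
      ring
    have hwn : 0 < ‖w‖ := by
      have h1 : (0:ℝ) < ⟪w, w⟫ := by rw [hww]; linarith
      refine norm_pos_iff.mpr fun h0 => ?_
      rw [h0, inner_zero_left] at h1
      linarith
    have hpos : ∀ z, (∃ i < n, OnArc (p i) (p (i + 1)) z) → 0 < ⟪‖w‖⁻¹ • w, z⟫ := by
      rintro z ⟨i, hi, hOn⟩
      by_contra hle
      push_neg at hle
      rw [real_inner_smul_left] at hle
      have hwz : ⟪w, z⟫ ≤ 0 := by
        by_contra hpos'
        push_neg at hpos'
        exact absurd hle (not_le.mpr (mul_pos (inv_pos.mpr hwn) hpos'))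
      have hsum : ⟪p 0, z⟫ + ⟪B, z⟫ ≤ 0 := by
        rw [hw, inner_add_left] at hwz
        linarith
      have hz1 : ‖z‖ = 1 := hOn.1
      have h2 : Real.arccos (-⟪p 0, z⟫) ≤ Real.arccos ⟪B, z⟫ := arccos_antitone (by linarith)
      have h3 : Real.arccos (-⟪p 0, z⟫) = Real.pi - Real.arccos ⟪p 0, z⟫ := Real.arccos_neg _
      have h4 := hmain z i hi hOn
      have h5 : sdist z B = Real.arccos ⟪B, z⟫ := by
        rw [sdist_comm']; rfl
      have h6 : sdist (p 0) z = Real.arccos ⟪p 0, z⟫ := rfl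
      rw [h5, h6] at h4
      linarith
    refine ⟨‖w‖⁻¹ • w, ?_, hpos, ?_⟩
    · rw [norm_smul, norm_inv, norm_norm, inv_mul_cancel₀ (ne_of_gt hwn)]
    · intro z hz hcon
      have h1 := hpos z hz
      rw [inner_neg_left] at hcon
      linarith
end

section
/- Let S be a disk in a singular hyperbolic surface bounded by n geodesic segments meeting at n vertices (an n-gon), with all interior cone angles ≥ 2π and all virtual vertices on the boundary geodesics having interior angle ≥ π. Then Area(S) ≤ (n−2)π. -/
open scoped BigOperators

/-- Area bound for a hyperbolic `n`-gon: a disk `S` (Euler characteristic `1`) in a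
singular hyperbolic surface bounded by `n` geodesic segments meeting at the `n`
distinguished vertices `Vdist`, encoded combinatorially by a triangulation by hyperbolic
triangles as in the Gauss–Bonnet setup: interior cone angles are `≥ 2π`, virtual
(non-distinguished) boundary vertices on the boundary geodesics have interior angle
`≥ π`, and the interior angle at each of the `n` vertices is positive (so each exterior
angle is `< π`).  Then `Area(S) ≤ (n − 2)·π`. -/
theorem stmt_9 (V F : Type) [Fintype V] [Fintype F] [DecidableEq V]
    (Vint Vdist Vbd : Finset V)
    (hpart : ∀ v : V,
      (v ∈ Vint ∧ v ∉ Vdist ∧ v ∉ Vbd) ∨ (v ∉ Vint ∧ v ∈ Vdist ∧ v ∉ Vbd) ∨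
        (v ∉ Vint ∧ v ∉ Vdist ∧ v ∈ Vbd))
    (angle : F → V → ℝ) (hangle : ∀ f v, 0 ≤ angle f v)
    (harea : ∀ f : F, 0 < Real.pi - ∑ v : V, angle f v)
    (hcone : ∀ v ∈ Vint, 2 * Real.pi ≤ ∑ f : F, angle f v)
    (hbd : ∀ v ∈ Vbd, Real.pi ≤ ∑ f : F, angle f v)
    (hvert : ∀ v ∈ Vdist, 0 < ∑ f : F, angle f v)
    (E : ℕ) (hedge : 3 * Fintype.card F + (Vdist.card + Vbd.card) = 2 * E)
    (n : ℕ) (hn : n = Vdist.card) (hn1 : 1 ≤ n)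
    (hdisk : (Fintype.card V : ℤ) - (E : ℤ) + (Fintype.card F : ℤ) = 1) :
    ∑ f : F, (Real.pi - ∑ v : V, angle f v) ≤ ((n : ℝ) - 2) * Real.pi := by
  classical
  have hApos : ∀ v : V, (0:ℝ) ≤ ∑ f : F, angle f v :=
    fun v => Finset.sum_nonneg fun f _ => hangle f v
  -- disjointness and union
  have hd1 : Disjoint Vint Vdist := by
    rw [Finset.disjoint_left]
    intro v hv hv'
    rcases hpart v with ⟨_, h, _⟩ | ⟨h, _, _⟩ | ⟨h, _, _⟩ <;> tauto
  have hd2 : Disjoint (Vint ∪ Vdist) Vbd := by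
    rw [Finset.disjoint_left]
    intro v hv hv'
    rcases hpart v with ⟨_, _, h⟩ | ⟨_, _, h⟩ | ⟨h, h', _⟩ <;>
      simp_all [Finset.mem_union] <;> tauto
  have huniv : Vint ∪ Vdist ∪ Vbd = (Finset.univ : Finset V) := by
    ext v
    simp only [Finset.mem_union, Finset.mem_univ, iff_true]
    rcases hpart v with ⟨h, _, _⟩ | ⟨_, h, _⟩ | ⟨_, _, h⟩ <;> tauto
  have hcardV : Fintype.card V = Vint.card + Vdist.card + Vbd.card := by
    rw [← Finset.card_univ, ← huniv, Finset.card_union_of_disjoint hd2,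
      Finset.card_union_of_disjoint hd1]
  -- face count
  have hF : (Fintype.card F : ℤ) = 2 * Vint.card + Vdist.card + Vbd.card - 2 := by
    have h1 : (3 * Fintype.card F + (Vdist.card + Vbd.card) : ℤ) = 2 * E := by
      exact_mod_cast hedge
    have h2 : ((Vint.card + Vdist.card + Vbd.card : ℕ) : ℤ) - E + Fintype.card F = 1 := by
      rw [← hcardV]; exact hdisk
    push_cast at h2
    linarith
  -- sum splitting
  have hswap : ∑ f : F, ∑ v : V, angle f v = ∑ v : V, ∑ f : F, angle f v :=
    Finset.sum_comm
  have hsplit : ∑ v : V, ∑ f : F, angle f v =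
      (∑ v ∈ Vint, ∑ f : F, angle f v) + (∑ v ∈ Vdist, ∑ f : F, angle f v) +
        (∑ v ∈ Vbd, ∑ f : F, angle f v) := by
    rw [← Finset.sum_union hd1, ← Finset.sum_union hd2, huniv]
  have h1 : (Vint.card : ℝ) * (2 * Real.pi) ≤ ∑ v ∈ Vint, ∑ f : F, angle f v := by
    calc (Vint.card : ℝ) * (2 * Real.pi) = ∑ _v ∈ Vint, 2 * Real.pi := by
          rw [Finset.sum_const, nsmul_eq_mul]
      _ ≤ _ := Finset.sum_le_sum fun v hv => hcone v hv
  have h2 : (Vbd.card : ℝ) * Real.pi ≤ ∑ v ∈ Vbd, ∑ f : F, angle f v := by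
    calc (Vbd.card : ℝ) * Real.pi = ∑ _v ∈ Vbd, Real.pi := by
          rw [Finset.sum_const, nsmul_eq_mul]
      _ ≤ _ := Finset.sum_le_sum fun v hv => hbd v hv
  have h3 : (0:ℝ) ≤ ∑ v ∈ Vdist, ∑ f : F, angle f v :=
    Finset.sum_nonneg fun v _ => hApos v
  have hlhs : ∑ f : F, (Real.pi - ∑ v : V, angle f v) =
      (Fintype.card F : ℝ) * Real.pi - ∑ v : V, ∑ f : F, angle f v := by
    rw [Finset.sum_sub_distrib, Finset.sum_const, Finset.card_univ, nsmul_eq_mul, hswap]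
  have hFr : (Fintype.card F : ℝ) = 2 * Vint.card + Vdist.card + Vbd.card - 2 := by
    exact_mod_cast hF
  have hnr : (n : ℝ) = Vdist.card := by exact_mod_cast hn
  rw [hlhs, hsplit, hFr, hnr]
  linarith
end
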